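/- arXiv:1411.0143 — 9 statements merged into one kernel-verified Lean document; each statement's English description precedes it below -/
import Mathlib

section
/- In the sender–receiver exploration process on a finite simple graph G, the set of successful transmission pairs, regarded as edges {s,r} of G, forms an induced matching: distinct successful edges share no endpoint, and moreover no edge of G joins an endpoint of one successful edge to an endpoint of a different successful edge. -/
open Finset

variable {V : Type*} [Fintype V] [LinearOrder V]

/-- The sender–receiver exploration process on a finite simple graph `G`,
run on the set `U` of currently unexplored vertices.  It returns the triple
`(A, a, L)` where `A` is the final active set, `a` is the total number of RTS
attempts performed and `L` is the list of successful transmission pairs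
`(s, r)`. -/
def explore (G : SimpleGraph V) [DecidableRel G.Adj] (c : V → Finset V → V)
    (U : Finset V) : Finset V × ℕ × List (V × V) :=
  if h : U.Nonempty then
    if (G.neighborFinset (U.min' h) ∩ U.erase (U.min' h)).Nonempty then
      let s := U.min' h
      let r := c s (G.neighborFinset s ∩ U.erase s)
      let p := explore G c ((U.erase (U.min' h)) \
        (G.neighborFinset (U.min' h) ∪
          G.neighborFinset (c (U.min' h)
            (G.neighborFinset (U.min' h) ∩ U.erase (U.min' h)))))
      (insert s (insert r p.1), p.2.1 + 1, (s, r) :: p.2.2)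
    else
      let p := explore G c (U.erase (U.min' h))
      (insert (U.min' h) p.1, p.2.1 + 1, p.2.2)
  else (∅, 0, [])
termination_by U.card
decreasing_by
  · exact lt_of_le_of_lt (Finset.card_le_card Finset.sdiff_subset)
      (Finset.card_erase_lt_of_mem (U.min'_mem h))
  · exact Finset.card_erase_lt_of_mem (U.min'_mem h)

lemma explore_spec (G : SimpleGraph V) [DecidableRel G.Adj] (c : V → Finset V → V)
    (hc : ∀ (s : V) (W : Finset V), W.Nonempty → c s W ∈ W) (U : Finset V) :
    (∀ p ∈ (explore G c U).2.2, p.1 ∈ U ∧ p.2 ∈ U ∧ G.Adj p.1 p.2) ∧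
      (explore G c U).2.2.Pairwise
        (fun p q => ∀ a ∈ ({p.1, p.2} : Set V), ∀ b ∈ ({q.1, q.2} : Set V),
          a ≠ b ∧ ¬ G.Adj a b) := by
  induction U using Finset.strongInductionOn with
  | _ U ih =>
    rw [explore]
    split_ifs with h h2
    · -- successful case
      set s := U.min' h with hs
      set W := G.neighborFinset s ∩ U.erase s with hW
      set r := c s W with hr
      have hrW : r ∈ W := hc s W h2
      have hadj : G.Adj s r := by
        have := (Finset.mem_inter.mp hrW).1
        rwa [SimpleGraph.mem_neighborFinset] at this
      have hrU : r ∈ U := Finset.mem_of_mem_erase (Finset.mem_inter.mp hrW).2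
      set U' := (U.erase s) \ (G.neighborFinset s ∪ G.neighborFinset r) with hU'
      have hsub : U' ⊂ U :=
        lt_of_le_of_lt (Finset.sdiff_subset) (Finset.erase_ssubset (U.min'_mem h))
      have ihU := ih U' hsub
      have hkey : ∀ b ∈ U', (s ≠ b ∧ ¬ G.Adj s b) ∧ (r ≠ b ∧ ¬ G.Adj r b) := by
        intro b hb
        rw [hU', Finset.mem_sdiff, Finset.mem_union, not_or] at hb
        obtain ⟨hb1, hb2, hb3⟩ := hb
        refine ⟨⟨?_, fun hadj' => hb2 ?_⟩, ⟨?_, fun hadj' => hb3 ?_⟩⟩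
        · exact fun hsb => (Finset.mem_erase.mp hb1).1 hsb.symm
        · rwa [SimpleGraph.mem_neighborFinset]
        · rintro rfl
          exact hb2 (Finset.mem_inter.mp hrW).1
        · rwa [SimpleGraph.mem_neighborFinset]
      constructor
      · intro p hp
        simp only [List.mem_cons] at hp
        rcases hp with rfl | hp
        · exact ⟨U.min'_mem h, hrU, hadj⟩
        · obtain ⟨h1, h2', h3⟩ := ihU.1 p hp
          exact ⟨(hsub.subset) h1, (hsub.subset) h2', h3⟩
      · rw [List.pairwise_cons]
        refine ⟨?_, ihU.2⟩
        intro q hq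
        obtain ⟨hq1, hq2, _⟩ := ihU.1 q hq
        intro a ha b hb
        have hb' : (s ≠ b ∧ ¬ G.Adj s b) ∧ (r ≠ b ∧ ¬ G.Adj r b) := by
          rcases hb with rfl | rfl
          · exact hkey _ hq1
          · exact hkey _ hq2
        rcases ha with rfl | rfl
        · exact hb'.1
        · exact hb'.2
    · -- unsuccessful case
      have hsub : U.erase (U.min' h) ⊂ U := Finset.erase_ssubset (U.min'_mem h)
      have ihU := ih _ hsub
      exact ⟨fun p hp => by
        obtain ⟨h1, h2', h3⟩ := ihU.1 p hp
        exact ⟨(hsub.subset) h1, (hsub.subset) h2', h3⟩, ihU.2⟩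
    · simp

/-- The successful transmission pairs produced by the sender–receiver
exploration process, regarded as edges `{s, r}` of `G`, form an induced
matching: every pair is an edge of `G`; two distinct successful edges share no
endpoint; and no edge of `G` joins an endpoint of one successful edge to an
endpoint of a different successful edge. -/
theorem explore_pairs_inducedMatching
    (G : SimpleGraph V) [DecidableRel G.Adj] (c : V → Finset V → V)
    (hc : ∀ (s : V) (W : Finset V), W.Nonempty → c s W ∈ W) :
    (∀ p ∈ (explore G c Finset.univ).2.2, G.Adj p.1 p.2) ∧
      (explore G c Finset.univ).2.2.Pairwise
        (fun p q => ∀ a ∈ ({p.1, p.2} : Set V), ∀ b ∈ ({q.1, q.2} : Set V),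
          a ≠ b ∧ ¬ G.Adj a b) := by
  obtain ⟨h1, h2⟩ := explore_spec G c hc Finset.univ
  exact ⟨fun p hp => (h1 p hp).2.2, h2⟩
end

section
/- The series ∑_i F_i(μ) over i ∈ ℕ converges absolutely and equals −λ · [ S₀ + S₁ + (S₀ − μ(0)) · (S₂ − S₁)/S₁ ], where S₀ = ∑_j μ(j), S₁ = ∑_j j·μ(j) and S₂ = ∑_j j²·μ(j). -/
/-- Total mass `S₀ = ∑_j μ(j)`. -/
noncomputable def S0 (μ : ℕ → ℝ) : ℝ := ∑' (j : ℕ), μ j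

/-- First moment `S₁ = ∑_j j·μ(j)`. -/
noncomputable def S1 (μ : ℕ → ℝ) : ℝ := ∑' (j : ℕ), (j : ℝ) * μ j

/-- Second moment `S₂ = ∑_j j²·μ(j)`. -/
noncomputable def S2 (μ : ℕ → ℝ) : ℝ := ∑' (j : ℕ), (j : ℝ) ^ 2 * μ j

/-- The degree distribution `α(i) = μ(i)/S₀`. -/
noncomputable def alphaM (μ : ℕ → ℝ) (i : ℕ) : ℝ := μ i / S0 μ

/-- The size-biased distribution `β(i) = i·μ(i)/S₁`. -/
noncomputable def betaM (μ : ℕ → ℝ) (i : ℕ) : ℝ := (i : ℝ) * μ i / S1 μ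

/-- The sender–receiver drift
`F_i(μ) = −λ·S₀·[ α(i) + β(i)·(∑_j j·α(j) + (1−α(0))·∑_j (j−1)·β(j))
  + (β(i) − β(i+1))·(∑_j (j−1)·β(j))·(∑_j j·α(j) + (1−α(0))·∑_j (j−2)·β(j)) ]`. -/
noncomputable def F (lam : ℝ) (μ : ℕ → ℝ) (i : ℕ) : ℝ :=
  -lam * S0 μ *
    (alphaM μ i
      + betaM μ i * ((∑' (j : ℕ), (j : ℝ) * alphaM μ j)
          + (1 - alphaM μ 0) * ∑' (j : ℕ), ((j : ℝ) - 1) * betaM μ j)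
      + (betaM μ i - betaM μ (i + 1)) * (∑' (j : ℕ), ((j : ℝ) - 1) * betaM μ j)
          * ((∑' (j : ℕ), (j : ℝ) * alphaM μ j)
              + (1 - alphaM μ 0) * ∑' (j : ℕ), ((j : ℝ) - 2) * betaM μ j))

/-- The series `∑_i F_i(μ)` converges absolutely and equals
`−λ·[S₀ + S₁ + (S₀ − μ(0))·(S₂ − S₁)/S₁]`. -/
theorem tsum_F_eq (lam : ℝ) (hlam : 0 < lam) (μ : ℕ → ℝ)
    (hpos : ∀ j, 0 ≤ μ j) (h0 : Summable μ)
    (h1 : Summable fun j : ℕ => (j : ℝ) * μ j)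
    (h2 : Summable fun j : ℕ => (j : ℝ) ^ 2 * μ j)
    (hS0 : 0 < S0 μ) (hS1 : 0 < S1 μ) :
    (Summable fun i : ℕ => |F lam μ i|) ∧
      ∑' (i : ℕ), F lam μ i
        = -lam * (S0 μ + S1 μ + (S0 μ - μ 0) * (S2 μ - S1 μ) / S1 μ) := by
  have hS0' : S0 μ ≠ 0 := ne_of_gt hS0
  have hS1' : S1 μ ≠ 0 := ne_of_gt hS1
  have sa : Summable (alphaM μ) := h0.div_const _
  have sb : Summable (betaM μ) := h1.div_const _
  have sb' : Summable (fun i => betaM μ (i + 1)) := (summable_nat_add_iff 1).mpr sb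
  obtain ⟨c1, hc1⟩ : ∃ c : ℝ, ((∑' (j : ℕ), (j : ℝ) * alphaM μ j)
      + (1 - alphaM μ 0) * ∑' (j : ℕ), ((j : ℝ) - 1) * betaM μ j) = c := ⟨_, rfl⟩
  obtain ⟨c2, hc2⟩ : ∃ c : ℝ, ((∑' (j : ℕ), ((j : ℝ) - 1) * betaM μ j)
      * ((∑' (j : ℕ), (j : ℝ) * alphaM μ j)
          + (1 - alphaM μ 0) * ∑' (j : ℕ), ((j : ℝ) - 2) * betaM μ j)) = c := ⟨_, rfl⟩
  have hF : F lam μ = fun i => (-lam * S0 μ) *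
      (alphaM μ i + betaM μ i * c1 + (betaM μ i - betaM μ (i + 1)) * c2) := by
    funext i
    rw [F, ← hc1, ← hc2]; ring
  have hFsum : Summable (F lam μ) := by
    rw [hF]
    exact (((sa.add (sb.mul_right c1)).add ((sb.sub sb').mul_right c2)).mul_left _)
  have hβ0 : betaM μ 0 = 0 := by simp [betaM]
  have htel : ∑' (i : ℕ), (betaM μ i - betaM μ (i + 1)) = 0 := by
    rw [Summable.tsum_sub sb sb', Summable.tsum_eq_zero_add sb, hβ0]; ring
  have hα : ∑' (i : ℕ), alphaM μ i = 1 := by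
    simp only [alphaM]; rw [tsum_div_const]
    exact div_self hS0'
  have hβ : ∑' (i : ℕ), betaM μ i = 1 := by
    simp only [betaM]; rw [tsum_div_const]
    exact div_self hS1'
  have hjα : ∑' (j : ℕ), (j : ℝ) * alphaM μ j = S1 μ / S0 μ := by
    have h : (fun j : ℕ => (j : ℝ) * alphaM μ j) = fun j : ℕ => ((j : ℝ) * μ j) / S0 μ := by
      funext j; rw [alphaM]; ring
    rw [h, tsum_div_const]; rfl
  have hjβ : ∑' (j : ℕ), ((j : ℝ) - 1) * betaM μ j = (S2 μ - S1 μ) / S1 μ := by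
    have h : (fun j : ℕ => ((j : ℝ) - 1) * betaM μ j)
        = fun j : ℕ => ((j : ℝ) ^ 2 * μ j - (j : ℝ) * μ j) / S1 μ := by
      funext j; rw [betaM]; field_simp
    rw [h, tsum_div_const, Summable.tsum_sub h2 h1]; rfl
  refine ⟨summable_abs_iff.mpr hFsum, ?_⟩
  rw [hF, tsum_mul_left,
      Summable.tsum_add (sa.add (sb.mul_right c1)) ((sb.sub sb').mul_right c2),
      Summable.tsum_add sa (sb.mul_right c1), tsum_mul_right, tsum_mul_right,
      hα, hβ, htel, ← hc1, hjα, hjβ]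
  simp only [alphaM]
  field_simp
  ring
end

section
/- Let λ > 0, ν > 0, and let u : [0,∞) → (0,∞) be differentiable with u'(t) = −λ·u(t)·(1 + 2ν·u(t) − ν·u(t)·e^(−ν·u(t))) for all t ≥ 0. Define μ_t(i) = u(t)·e^(−ν·u(t))·(ν·u(t))^i / i! for all t ≥ 0 and i ∈ ℕ. Then for every t ≥ 0 and i ∈ ℕ, the coordinate t ↦ μ_t(i) is differentiable and d/dt μ_t(i) = F_i(μ_t); in other words, the Poisson-profile family μ_t solves the sender–receiver differential system. -/
private lemma sumG (y : ℝ) : Summable (fun k : ℕ => y ^ k / (k.factorial : ℝ)) :=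
  Real.summable_pow_div_factorial y

private lemma tsumG (y : ℝ) : ∑' k : ℕ, y ^ k / (k.factorial : ℝ) = Real.exp y := by
  rw [Real.exp_eq_exp_ℝ, NormedSpace.exp_eq_tsum_div]

private lemma shift1 (y : ℝ) :
    (fun n : ℕ => ((n + 1 : ℕ) : ℝ) * (y ^ (n + 1) / ((n + 1).factorial : ℝ)))
      = fun n : ℕ => y * (y ^ n / (n.factorial : ℝ)) := by
  funext n
  have h : ((n + 1).factorial : ℝ) = (n + 1 : ℝ) * (n.factorial : ℝ) := by
    rw [Nat.factorial_succ]; push_cast; ring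
  have hn : ((n : ℝ) + 1) ≠ 0 := by positivity
  have hf : (n.factorial : ℝ) ≠ 0 := Nat.cast_ne_zero.mpr n.factorial_ne_zero
  rw [h]; push_cast; field_simp; ring

private lemma sumH1 (y : ℝ) : Summable (fun k : ℕ => (k : ℝ) * (y ^ k / (k.factorial : ℝ))) := by
  rw [← summable_nat_add_iff 1, shift1 y]
  exact (sumG y).mul_left y

private lemma tsumH1 (y : ℝ) :
    ∑' k : ℕ, (k : ℝ) * (y ^ k / (k.factorial : ℝ)) = y * Real.exp y := by
  rw [Summable.tsum_eq_zero_add (sumH1 y)]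
  simp only [shift1 y, Nat.cast_zero, zero_mul, zero_add, tsum_mul_left, tsumG]

private lemma shift2 (y : ℝ) :
    (fun n : ℕ => ((n + 1 : ℕ) : ℝ) ^ 2 * (y ^ (n + 1) / ((n + 1).factorial : ℝ)))
      = fun n : ℕ => y * ((n : ℝ) * (y ^ n / (n.factorial : ℝ)) + y ^ n / (n.factorial : ℝ)) := by
  funext n
  have h : ((n + 1).factorial : ℝ) = (n + 1 : ℝ) * (n.factorial : ℝ) := by
    rw [Nat.factorial_succ]; push_cast; ring
  have hn : ((n : ℝ) + 1) ≠ 0 := by positivity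
  have hf : (n.factorial : ℝ) ≠ 0 := Nat.cast_ne_zero.mpr n.factorial_ne_zero
  rw [h]; push_cast; field_simp; ring

private lemma sumH2 (y : ℝ) :
    Summable (fun k : ℕ => (k : ℝ) ^ 2 * (y ^ k / (k.factorial : ℝ))) := by
  rw [← summable_nat_add_iff 1, shift2 y]
  exact ((sumH1 y).add (sumG y)).mul_left y

private lemma tsumH2 (y : ℝ) :
    ∑' k : ℕ, (k : ℝ) ^ 2 * (y ^ k / (k.factorial : ℝ)) = y * (y + 1) * Real.exp y := by
  rw [Summable.tsum_eq_zero_add (sumH2 y)]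
  rw [shift2 y]
  simp only [Nat.cast_zero, zero_mul, zero_add, tsum_mul_left,
    Summable.tsum_add (sumH1 y) (sumG y), tsumH1, tsumG]
  norm_num
  ring

private lemma poisson_key (lam ν x : ℝ) (hν : 0 < ν) (hx : 0 < x) (i : ℕ) :
    F lam (fun k => x * Real.exp (-(ν * x)) * (ν * x) ^ k / (k.factorial : ℝ)) i
      = (Real.exp (-(ν * x)) * (ν * x) ^ i / (i.factorial : ℝ)) * (((i : ℝ) + 1) - ν * x)
        * (-lam * x * (1 + 2 * ν * x - ν * x * Real.exp (-(ν * x)))) := by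
  set y := ν * x with hy
  have hy0 : 0 < y := mul_pos hν hx
  have hxne : x ≠ 0 := hx.ne'
  have hyne : y ≠ 0 := hy0.ne'
  have heyne : Real.exp y ≠ 0 := Real.exp_ne_zero y
  have hEinv : Real.exp (-y) = (Real.exp y)⁻¹ := Real.exp_neg y
  have hfac : ∀ j : ℕ, (j.factorial : ℝ) ≠ 0 :=
    fun j => Nat.cast_ne_zero.mpr j.factorial_ne_zero
  have hS0 : S0 (fun k => x * Real.exp (-y) * y ^ k / (k.factorial : ℝ)) = x := by
    unfold S0
    calc ∑' (j : ℕ), x * Real.exp (-y) * y ^ j / (j.factorial : ℝ)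
        = ∑' (j : ℕ), (x * Real.exp (-y)) * (y ^ j / (j.factorial : ℝ)) :=
          tsum_congr fun j => by ring
      _ = x := by rw [tsum_mul_left, tsumG, hEinv]; field_simp
  have hS1 : S1 (fun k => x * Real.exp (-y) * y ^ k / (k.factorial : ℝ)) = x * y := by
    unfold S1
    calc ∑' (j : ℕ), (j : ℝ) * (x * Real.exp (-y) * y ^ j / (j.factorial : ℝ))
        = ∑' (j : ℕ), (x * Real.exp (-y)) * ((j : ℝ) * (y ^ j / (j.factorial : ℝ))) :=
          tsum_congr fun j => by ring
      _ = x * y := by rw [tsum_mul_left, tsumH1, hEinv]; field_simp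
  have TA : (∑' (j : ℕ), (j : ℝ) * (x * Real.exp (-y) * y ^ j / (j.factorial : ℝ) / x)) = y := by
    calc ∑' (j : ℕ), (j : ℝ) * (x * Real.exp (-y) * y ^ j / (j.factorial : ℝ) / x)
        = ∑' (j : ℕ), (Real.exp (-y)) * ((j : ℝ) * (y ^ j / (j.factorial : ℝ))) :=
          tsum_congr fun j => by
            have := hfac j; field_simp
      _ = y := by rw [tsum_mul_left, tsumH1, hEinv]; field_simp
  have TB : (∑' (j : ℕ), ((j : ℝ) - 1) *
        ((j : ℝ) * (x * Real.exp (-y) * y ^ j / (j.factorial : ℝ)) / (x * y))) = y := by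
    calc ∑' (j : ℕ), ((j : ℝ) - 1) *
          ((j : ℝ) * (x * Real.exp (-y) * y ^ j / (j.factorial : ℝ)) / (x * y))
        = ∑' (j : ℕ), ((x * Real.exp (-y)) * ((j : ℝ) ^ 2 * (y ^ j / (j.factorial : ℝ)))
            - (x * Real.exp (-y)) * ((j : ℝ) * (y ^ j / (j.factorial : ℝ)))) / (x * y) :=
          tsum_congr fun j => by
            have := hfac j; field_simp
      _ = ((x * Real.exp (-y)) * (y * (y + 1) * Real.exp y)
            - (x * Real.exp (-y)) * (y * Real.exp y)) / (x * y) := by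
          rw [tsum_div_const,
            Summable.tsum_sub ((sumH2 y).mul_left _) ((sumH1 y).mul_left _),
            tsum_mul_left, tsum_mul_left, tsumH1, tsumH2]
      _ = y := by rw [hEinv]; field_simp; ring
  have TC : (∑' (j : ℕ), ((j : ℝ) - 2) *
        ((j : ℝ) * (x * Real.exp (-y) * y ^ j / (j.factorial : ℝ)) / (x * y))) = y - 1 := by
    calc ∑' (j : ℕ), ((j : ℝ) - 2) *
          ((j : ℝ) * (x * Real.exp (-y) * y ^ j / (j.factorial : ℝ)) / (x * y))
        = ∑' (j : ℕ), ((x * Real.exp (-y)) * ((j : ℝ) ^ 2 * (y ^ j / (j.factorial : ℝ)))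
            - (2 * (x * Real.exp (-y))) * ((j : ℝ) * (y ^ j / (j.factorial : ℝ)))) / (x * y) :=
          tsum_congr fun j => by
            have := hfac j; field_simp
      _ = ((x * Real.exp (-y)) * (y * (y + 1) * Real.exp y)
            - (2 * (x * Real.exp (-y))) * (y * Real.exp y)) / (x * y) := by
          rw [tsum_div_const,
            Summable.tsum_sub ((sumH2 y).mul_left _) ((sumH1 y).mul_left _),
            tsum_mul_left, tsum_mul_left, tsumH1, tsumH2]
      _ = y - 1 := by rw [hEinv]; field_simp; ring
  simp only [F, alphaM, betaM, hS0, hS1, TA, TB, TC]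
  have hfs : ((i + 1).factorial : ℝ) = ((i : ℝ) + 1) * (i.factorial : ℝ) := by
    rw [Nat.factorial_succ]; push_cast; ring
  have hii : ((i : ℝ) + 1) ≠ 0 := by positivity
  have hfi := hfac i
  rw [hEinv]
  push_cast [hfs, pow_succ]
  field_simp
  ring

/-- The Poisson-profile family `μ_t(i) = u(t)·e^(−ν·u(t))·(ν·u(t))^i / i!`,
where `u` solves `u' = −λ·u·(1 + 2ν·u − ν·u·e^(−ν·u))` on `[0,∞)` with values
in `(0,∞)`, solves the sender–receiver differential system: for every `t ≥ 0`
and `i ∈ ℕ`, `d/dt μ_t(i) = F_i(μ_t)`. -/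
theorem poisson_profile_solves_system (lam ν : ℝ) (hlam : 0 < lam) (hν : 0 < ν)
    (u : ℝ → ℝ) (hu : ∀ t, 0 ≤ t → 0 < u t)
    (hderiv : ∀ t, 0 ≤ t → HasDerivAt u
      (-lam * u t * (1 + 2 * ν * u t - ν * u t * Real.exp (-(ν * u t)))) t) :
    ∀ t, 0 ≤ t → ∀ i : ℕ,
      HasDerivAt
        (fun s => u s * Real.exp (-(ν * u s)) * (ν * u s) ^ i / (i.factorial : ℝ))
        (F lam
          (fun k => u t * Real.exp (-(ν * u t)) * (ν * u t) ^ k / (k.factorial : ℝ))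
          i) t := by
  intro t ht i
  have hx : 0 < u t := hu t ht
  have hu' := hderiv t ht
  set u' : ℝ := -lam * u t * (1 + 2 * ν * u t - ν * u t * Real.exp (-(ν * u t))) with hu'def
  have hpow := hu'.pow (i + 1)
  simp only [Nat.add_sub_cancel] at hpow
  have hexp := ((hu'.const_mul ν).neg).exp
  have hmul := hpow.mul hexp
  have hfinal := (hmul.const_mul (ν ^ i)).div_const (i.factorial : ℝ)
  have hfn : (fun s => u s * Real.exp (-(ν * u s)) * (ν * u s) ^ i / (i.factorial : ℝ))
      = fun s => ν ^ i * ((u s) ^ (i + 1) * Real.exp (-(ν * u s))) / (i.factorial : ℝ) := by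
    funext s; rw [mul_pow]; ring
  rw [hfn, poisson_key lam ν (u t) hν hx i]
  refine hfinal.congr_deriv ?_
  rw [mul_pow]
  push_cast
  simp only [hu'def, Pi.pow_apply, Pi.neg_apply]
  ring
end

section
/- Let λ > 0, ν > 0 and let u : [0,∞) → ℝ be differentiable with u(0) = 1 and u'(t) = −λ·u(t)·(1 + 2ν·u(t) − ν·u(t)·e^(−ν·u(t))) for all t ≥ 0. Then 0 < u(t) ≤ 1 for all t ≥ 0, and u is strictly decreasing on [0,∞). -/
/-- Any solution of the Poisson spatial-reuse ODE
`u'(t) = −λ·u(t)·(1 + 2ν·u(t) − ν·u(t)·e^(−ν·u(t)))` on `[0,∞)` with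
`u(0) = 1` satisfies `0 < u(t) ≤ 1` for all `t ≥ 0` and is strictly
decreasing on `[0,∞)`. -/
theorem poisson_ode_pos_le_one_strictAnti (lam ν : ℝ) (hlam : 0 < lam) (hν : 0 < ν)
    (u : ℝ → ℝ) (hu0 : u 0 = 1)
    (hderiv : ∀ t, 0 ≤ t → HasDerivAt u
      (-lam * u t * (1 + 2 * ν * u t - ν * u t * Real.exp (-(ν * u t)))) t) :
    (∀ t, 0 ≤ t → 0 < u t ∧ u t ≤ 1) ∧ StrictAntiOn u (Set.Ici 0) := by
  have hc : ∀ t, 0 ≤ t → ContinuousAt u t := fun t ht => (hderiv t ht).continuousAt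
  -- f x > 0 for x > 0
  have hfpos : ∀ x : ℝ, 0 < x →
      0 < 1 + 2 * ν * x - ν * x * Real.exp (-(ν * x)) := by
    intro x hx
    have h1 : Real.exp (-(ν * x)) < 1 := by
      rw [Real.exp_lt_one_iff]
      nlinarith
    nlinarith [Real.exp_pos (-(ν * x)), mul_pos hν hx]
  have hfle : ∀ x : ℝ, 0 ≤ x → x ≤ 1 →
      1 + 2 * ν * x - ν * x * Real.exp (-(ν * x)) ≤ 1 + 2 * ν := by
    intro x hx0 hx1
    have h1 : 0 ≤ ν * x * Real.exp (-(ν * x)) :=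
      mul_nonneg (mul_nonneg hν.le hx0) (Real.exp_pos _).le
    nlinarith
  set K : ℝ := lam * (1 + 2 * ν) with hK
  have hpos : ∀ t, 0 ≤ t → 0 < u t := by
    by_contra h
    push_neg at h
    obtain ⟨t1, ht1, ht1le⟩ := h
    set S := {t : ℝ | 0 ≤ t ∧ u t ≤ 0} with hS
    have hSne : S.Nonempty := ⟨t1, ht1, ht1le⟩
    have hSbdd : BddBelow S := ⟨0, fun t ht => ht.1⟩
    set t0 := sInf S with ht0def
    have ht0nn : 0 ≤ t0 := le_csInf hSne (fun t ht => ht.1)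
    have hut0 : u t0 ≤ 0 := by
      by_contra hcon
      push_neg at hcon
      have hev : ∀ᶠ s in nhds t0, 0 < u s :=
        (hc t0 ht0nn).eventually (eventually_gt_nhds hcon)
      obtain ⟨δ, hδ, hball⟩ := Metric.eventually_nhds_iff.mp hev
      obtain ⟨s, hsS, hslt⟩ := exists_lt_of_csInf_lt hSne
        (lt_add_of_pos_right t0 hδ)
      have hs0 : t0 ≤ s := csInf_le hSbdd hsS
      have : 0 < u s := hball (by rw [Real.dist_eq]; rw [abs_lt]; constructor <;> linarith)
      linarith [hsS.2]
    have ht0pos : 0 < t0 := by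
      rcases eq_or_lt_of_le ht0nn with h | h
      · exfalso; rw [← h, hu0] at hut0; linarith
      · exact h
    have hA : ∀ t, 0 ≤ t → t < t0 → 0 < u t := by
      intro t h0 hlt
      by_contra hcon
      push_neg at hcon
      have : t0 ≤ t := csInf_le hSbdd ⟨h0, hcon⟩
      linarith
    have hcont : ContinuousOn u (Set.Icc 0 t0) :=
      fun t ht => (hc t ht.1).continuousWithinAt
    have hanti : StrictAntiOn u (Set.Icc 0 t0) := by
      apply strictAntiOn_of_deriv_neg (convex_Icc 0 t0) hcont
      intro x hx
      rw [interior_Icc] at hx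
      have hux : 0 < u x := hA x hx.1.le hx.2
      rw [(hderiv x hx.1.le).deriv]
      have := hfpos (u x) hux
      nlinarith [mul_pos hlam hux]
    have hle1 : ∀ t, 0 ≤ t → t ≤ t0 → u t ≤ 1 := by
      intro t h0 hle
      rcases eq_or_lt_of_le h0 with h | h
      · rw [← h, hu0]
      · have := hanti ⟨le_refl 0, ht0nn⟩ ⟨h0, hle⟩ h
        rw [hu0] at this; linarith
    -- weight function
    set w : ℝ → ℝ := fun t => u t * Real.exp (K * t) with hw
    have hwderiv : ∀ t, 0 ≤ t → HasDerivAt w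
        (-lam * u t * (1 + 2 * ν * u t - ν * u t * Real.exp (-(ν * u t))) *
          Real.exp (K * t) + u t * (Real.exp (K * t) * (K * 1))) t := by
      intro t ht
      exact (hderiv t ht).mul (((hasDerivAt_id t).const_mul K).exp)
    have hwmono : MonotoneOn w (Set.Icc 0 t0) := by
      apply monotoneOn_of_deriv_nonneg (convex_Icc 0 t0)
      · exact fun t ht => ((hwderiv t ht.1).continuousAt).continuousWithinAt
      · intro x hx
        rw [interior_Icc] at hx
        exact ((hwderiv x hx.1.le).differentiableAt).differentiableWithinAt
      · intro x hx
        rw [interior_Icc] at hx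
        rw [(hwderiv x hx.1.le).deriv]
        have hux : 0 < u x := hA x hx.1.le hx.2
        have hux1 : u x ≤ 1 := hle1 x hx.1.le hx.2.le
        have hfl := hfle (u x) hux.le hux1
        have hE : 0 < Real.exp (K * x) := Real.exp_pos _
        nlinarith [mul_pos hE hux, mul_pos (mul_pos hE hux) hlam]
    have hw0 : w 0 = 1 := by simp [hw, hu0]
    have := hwmono ⟨le_refl 0, ht0nn⟩ ⟨ht0nn, le_refl t0⟩ ht0nn
    rw [hw0] at this
    have hE : 0 < Real.exp (K * t0) := Real.exp_pos _
    have h2 : w t0 = u t0 * Real.exp (K * t0) := rfl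
    rw [h2] at this
    nlinarith
  -- final assembly
  have hanti : StrictAntiOn u (Set.Ici 0) := by
    apply strictAntiOn_of_deriv_neg (convex_Ici 0)
      (fun t ht => (hc t ht).continuousWithinAt)
    intro x hx
    rw [interior_Ici] at hx
    have hux : 0 < u x := hpos x hx.le
    rw [(hderiv x hx.le).deriv]
    have := hfpos (u x) hux
    nlinarith [mul_pos hlam hux]
  refine ⟨fun t ht => ⟨hpos t ht, ?_⟩, hanti⟩
  rcases eq_or_lt_of_le ht with h | h
  · rw [← h, hu0]
  · have := hanti (Set.self_mem_Ici) ht h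
    rw [hu0] at this; linarith
end

section
/- Let λ > 0, ν > 0 and let u : [0,∞) → ℝ be the solution of the Poisson spatial-reuse ODE with u(0) = 1 and 0 < u(t) ≤ 1 for all t. Then the function t ↦ λ·u(t)·(1 + 2ν·u(t) − ν·u(t)·e^(−ν·u(t))) is integrable on [0,∞) and λ·∫₀^∞ u(t)·(1 + 2ν·u(t) − ν·u(t)·e^(−ν·u(t))) dt = 1 (the total normalized mass of explored nodes equals one). -/
open MeasureTheory Set Filter

private lemma antitoneOn_of_hasDerivAt_nonpos (w w' : ℝ → ℝ)
    (h : ∀ t, 0 ≤ t → HasDerivAt w (w' t) t)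
    (h0 : ∀ t, 0 ≤ t → w' t ≤ 0) : AntitoneOn w (Set.Ici 0) := by
  apply antitoneOn_of_deriv_nonpos (convex_Ici 0)
  · intro t ht
    exact (h t ht).continuousAt.continuousWithinAt
  · intro t ht
    rw [interior_Ici] at ht
    exact ((h t ht.le).differentiableAt.differentiableWithinAt)
  · intro t ht
    rw [interior_Ici] at ht
    rw [(h t ht.le).deriv]
    exact h0 t ht.le

/-- For the solution of the Poisson spatial-reuse ODE with `u(0) = 1` and
`0 < u(t) ≤ 1` for all `t ≥ 0`, the function
`t ↦ λ·u(t)·(1 + 2ν·u(t) − ν·u(t)·e^(−ν·u(t)))` is integrable on `[0,∞)` and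
`λ·∫₀^∞ u(t)·(1 + 2ν·u(t) − ν·u(t)·e^(−ν·u(t))) dt = 1`: the total normalized
mass of explored nodes equals one. -/
theorem poisson_ode_total_mass (lam ν : ℝ) (hlam : 0 < lam) (hν : 0 < ν)
    (u : ℝ → ℝ) (hu0 : u 0 = 1) (hu : ∀ t, 0 ≤ t → 0 < u t ∧ u t ≤ 1)
    (hderiv : ∀ t, 0 ≤ t → HasDerivAt u
      (-lam * u t * (1 + 2 * ν * u t - ν * u t * Real.exp (-(ν * u t)))) t) :
    IntegrableOn
        (fun t => lam * u t * (1 + 2 * ν * u t - ν * u t * Real.exp (-(ν * u t))))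
        (Set.Ici 0) ∧
      lam * ∫ t in Set.Ici (0 : ℝ),
          u t * (1 + 2 * ν * u t - ν * u t * Real.exp (-(ν * u t))) = 1 := by
  set f : ℝ → ℝ :=
    fun t => lam * u t * (1 + 2 * ν * u t - ν * u t * Real.exp (-(ν * u t))) with hf
  -- lower bound : lam * u t ≤ f t for t ≥ 0
  have hlow : ∀ t, 0 ≤ t → lam * u t ≤ f t := by
    intro t ht
    have h1 : 0 < u t := (hu t ht).1
    have he : Real.exp (-(ν * u t)) ≤ 1 := by
      rw [← Real.exp_zero]
      apply Real.exp_le_exp.2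
      nlinarith
    have hmul : ν * u t * Real.exp (-(ν * u t)) ≤ ν * u t * 1 :=
      mul_le_mul_of_nonneg_left he (by positivity)
    have hB : 1 ≤ 1 + 2 * ν * u t - ν * u t * Real.exp (-(ν * u t)) := by
      nlinarith
    have := mul_le_mul_of_nonneg_left hB (by positivity : (0:ℝ) ≤ lam * u t)
    simpa [hf, mul_assoc] using this
  have hfpos : ∀ t, 0 ≤ t → 0 ≤ f t := by
    intro t ht
    have h1 : 0 < u t := (hu t ht).1
    exact le_trans (by positivity) (hlow t ht)
  -- u antitone on Ici 0
  have hUant : AntitoneOn u (Set.Ici 0) := by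
    apply antitoneOn_of_hasDerivAt_nonpos u (fun t => -f t)
    · intro t ht
      have h1 := hderiv t ht
      convert h1 using 1
      simp only [hf]
      ring
    · intro t ht
      simpa using hfpos t ht
  -- limit L of u at infinity
  set v : ℝ → ℝ := fun t => u (max t 0) with hv
  have hvant : Antitone v := by
    intro s t hst
    exact hUant (le_max_right s 0) (le_max_right t 0) (max_le_max hst le_rfl)
  have hvbdd : BddBelow (Set.range v) := by
    refine ⟨0, ?_⟩
    rintro x ⟨t, rfl⟩
    exact (hu _ (le_max_right t 0)).1.le
  have hvten : Tendsto v atTop (nhds (⨅ t, v t)) := tendsto_atTop_ciInf hvant hvbdd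
  set L : ℝ := ⨅ t, v t with hL
  have huv : u =ᶠ[atTop] v := by
    filter_upwards [eventually_ge_atTop (0:ℝ)] with t ht
    simp [hv, max_eq_left ht]
  have huten : Tendsto u atTop (nhds L) := hvten.congr' huv.symm
  have hL0 : 0 ≤ L := le_ciInf fun t => (hu _ (le_max_right t 0)).1.le
  -- u t ≥ L for t ≥ 0
  have hLle : ∀ t, 0 ≤ t → L ≤ u t := by
    intro t ht
    refine le_of_tendsto huten ?_
    filter_upwards [eventually_ge_atTop t] with s hs
    exact hUant ht (ht.trans hs) hs
  -- L = 0
  have hLzero : L = 0 := by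
    by_contra h
    have hLpos : 0 < L := lt_of_le_of_ne hL0 (Ne.symm h)
    have hg : AntitoneOn (fun t => u t + lam * L * t) (Set.Ici 0) := by
      apply antitoneOn_of_hasDerivAt_nonpos _ (fun t => -f t + lam * L)
      · intro t ht
        have h1 := hderiv t ht
        have h2 : HasDerivAt (fun t : ℝ => lam * L * t) (lam * L) t := by
          simpa using (hasDerivAt_id t).const_mul (lam * L)
        have h3 := h1.add h2
        refine h3.congr_deriv ?_
        simp only [hf]
        ring
      · intro t ht
        have h4 := hlow t ht
        have h2 : lam * L ≤ lam * u t :=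
          mul_le_mul_of_nonneg_left (hLle t ht) hlam.le
        linarith
    set T : ℝ := 2 / (lam * L) with hT
    have hTpos : 0 < T := by positivity
    have hmono := hg (Set.self_mem_Ici) (Set.mem_Ici.2 hTpos.le) hTpos.le
    simp only [mul_zero, add_zero, hu0] at hmono
    have hlt : lam * L * T = 2 := by
      rw [hT]
      field_simp
    have huT := (hu T hTpos.le).1
    nlinarith
  rw [hLzero] at huten hLle
  -- FTC on Ioi 0 for g = -u
  have hgderiv : ∀ t ∈ Set.Ioi (0:ℝ), HasDerivAt (fun t => -u t) (f t) t := by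
    intro t ht
    have h1 := (hderiv t (le_of_lt ht)).neg
    refine h1.congr_deriv ?_
    simp only [hf]
    ring
  have hgcont : ContinuousWithinAt (fun t => -u t) (Set.Ici 0) 0 :=
    ((hderiv 0 le_rfl).neg.continuousAt).continuousWithinAt
  have hgten : Tendsto (fun t => -u t) atTop (nhds 0) := by
    simpa using huten.neg
  have hint : IntegrableOn f (Set.Ioi 0) :=
    integrableOn_Ioi_deriv_of_nonneg hgcont hgderiv
      (fun t ht => hfpos t (le_of_lt ht)) hgten
  have hval : ∫ t in Set.Ioi (0:ℝ), f t = 0 - (-u 0) :=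
    integral_Ioi_of_hasDerivAt_of_nonneg hgcont hgderiv
      (fun t ht => hfpos t (le_of_lt ht)) hgten
  rw [hu0] at hval
  constructor
  · rwa [integrableOn_Ici_iff_integrableOn_Ioi]
  · rw [MeasureTheory.integral_Ici_eq_integral_Ioi, ← integral_const_mul]
    have heq : ∀ t : ℝ, lam * (u t * (1 + 2 * ν * u t - ν * u t * Real.exp (-(ν * u t))))
        = f t := by
      intro t
      simp only [hf]
      ring
    simp_rw [heq]
    linarith [hval]
end

section
/- Let λ > 0, ν > 0 and let u : [0,∞) → ℝ be the solution of the Poisson spatial-reuse ODE with u(0) = 1 and 0 < u(t) ≤ 1 for all t. Then the function t ↦ (1 − e^(−ν·u(t)))·u(t) is integrable on [0,∞), and the spatial reuse θ = λ·∫₀^∞ (1 − e^(−ν·u(t)))·u(t) dt satisfies 0 < θ ≤ 1/2. -/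
open MeasureTheory

/-- Elementary inequality `2(1 - e^{-x}) ≤ 1 + 2x - x e^{-x}` for `x ≥ 0`. -/
lemma key_exp_ineq (x : ℝ) (hx : 0 ≤ x) :
    2 * (1 - Real.exp (-x)) ≤ 1 + 2 * x - x * Real.exp (-x) := by
  have h1 : 1 - x ≤ Real.exp (-x) := by linarith [Real.add_one_le_exp (-x)]
  have h2 : Real.exp (-x) ≤ 1 := Real.exp_le_one_iff.mpr (by linarith)
  rcases le_total x 2 with hx2 | hx2
  · have h3 : (2 - x) * (1 - x) ≤ (2 - x) * Real.exp (-x) :=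
      mul_le_mul_of_nonneg_left h1 (by linarith)
    nlinarith [sq_nonneg (x - 1/2)]
  · have h3 : (2 - x) * 1 ≤ (2 - x) * Real.exp (-x) :=
      mul_le_mul_of_nonpos_left h2 (by linarith)
    nlinarith

/-- For the solution of the Poisson spatial-reuse ODE with `u(0) = 1` and
`0 < u(t) ≤ 1` for all `t ≥ 0`, the function `t ↦ (1 − e^(−ν·u(t)))·u(t)` is
integrable on `[0,∞)`, and the spatial reuse
`θ = λ·∫₀^∞ (1 − e^(−ν·u(t)))·u(t) dt` satisfies `0 < θ ≤ 1/2`. -/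
theorem poisson_ode_spatial_reuse_bounds (lam ν : ℝ) (hlam : 0 < lam) (hν : 0 < ν)
    (u : ℝ → ℝ) (hu0 : u 0 = 1) (hu : ∀ t, 0 ≤ t → 0 < u t ∧ u t ≤ 1)
    (hderiv : ∀ t, 0 ≤ t → HasDerivAt u
      (-lam * u t * (1 + 2 * ν * u t - ν * u t * Real.exp (-(ν * u t)))) t) :
    IntegrableOn (fun t => (1 - Real.exp (-(ν * u t))) * u t) (Set.Ici 0) ∧
      0 < lam * ∫ t in Set.Ici (0 : ℝ), (1 - Real.exp (-(ν * u t))) * u t ∧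
        lam * ∫ t in Set.Ici (0 : ℝ), (1 - Real.exp (-(ν * u t))) * u t ≤ 1 / 2 := by
  set g : ℝ → ℝ := fun t => lam * u t * (1 + 2 * ν * u t - ν * u t * Real.exp (-(ν * u t)))
    with hg
  set h : ℝ → ℝ := fun t => (1 - Real.exp (-(ν * u t))) * u t with hh
  -- continuity of u on Ici 0
  have hucont : ContinuousOn u (Set.Ici 0) := fun t ht =>
    (hderiv t ht).continuousAt.continuousWithinAt
  have hecont : ContinuousOn (fun t => Real.exp (-(ν * u t))) (Set.Ici 0) :=
    ((continuousOn_const.mul hucont).neg).rexp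
  have hgcont : ContinuousOn g (Set.Ici 0) := by
    apply (continuousOn_const.mul hucont).mul
    exact (continuousOn_const.add (continuousOn_const.mul hucont)).sub
      ((continuousOn_const.mul hucont).mul hecont)
  have hhcont : ContinuousOn h (Set.Ici 0) := (continuousOn_const.sub hecont).mul hucont
  -- pointwise bounds on [0,∞)
  have hkey : ∀ t, 0 ≤ t → 2 * lam * h t ≤ g t := by
    intro t ht
    obtain ⟨hu1, _⟩ := hu t ht
    have hk := key_exp_ineq (ν * u t) (by positivity)
    simp only [hg, hh]
    nlinarith [mul_le_mul_of_nonneg_left hk (show (0:ℝ) ≤ lam * u t by positivity)]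
  have hhnn : ∀ t, 0 ≤ t → 0 ≤ h t := by
    intro t ht
    obtain ⟨hu1, _⟩ := hu t ht
    have he1 : Real.exp (-(ν * u t)) ≤ 1 := Real.exp_le_one_iff.mpr (by nlinarith)
    simp only [hh]; nlinarith
  have hhpos : ∀ t, 0 ≤ t → 0 < h t := by
    intro t ht
    obtain ⟨hu1, _⟩ := hu t ht
    have he1 : Real.exp (-(ν * u t)) < 1 := by
      rw [Real.exp_lt_one_iff]; nlinarith
    simp only [hh]; nlinarith
  have hgnn : ∀ t, 0 ≤ t → 0 ≤ g t := fun t ht =>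
    le_trans (by nlinarith [hhnn t ht, hlam.le]) (hkey t ht)
  -- FTC: ∫ in 0..T, g = 1 - u T for T ≥ 0
  have hFTC : ∀ T : ℝ, 0 ≤ T → ∫ t in (0:ℝ)..T, g t = 1 - u T := by
    intro T hT
    have huIcc : Set.uIcc (0:ℝ) T = Set.Icc 0 T := Set.uIcc_of_le hT
    have hint : IntervalIntegrable (fun t => -g t) volume 0 T := by
      apply ContinuousOn.intervalIntegrable
      rw [huIcc]
      exact (hgcont.mono Set.Icc_subset_Ici_self).neg
    have hft := intervalIntegral.integral_eq_sub_of_hasDerivAt (f := u) (f' := fun t => -g t)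
      (fun t ht => by
        have ht' : 0 ≤ t := (huIcc ▸ ht).1
        have := hderiv t ht'
        exact this.congr_deriv (by simp only [hg]; ring)) hint
    rw [intervalIntegral.integral_neg, hu0] at hft
    linarith
  -- integrability of g on Ioi 0
  have hgint : IntegrableOn g (Set.Ioi 0) := by
    apply MeasureTheory.integrableOn_Ioi_of_intervalIntegral_norm_bounded (l := Filter.atTop)
      (b := fun n : ℕ => (n : ℝ)) 1 0
    · intro n
      exact ((hgcont.mono (Set.Icc_subset_Ici_self (a := (n:ℝ))
        (b := 0))).integrableOn_compact isCompact_Icc).mono_set Set.Ioc_subset_Icc_self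
    · exact tendsto_natCast_atTop_atTop
    · filter_upwards with n
      have hn : (0:ℝ) ≤ n := Nat.cast_nonneg n
      have heq : Set.EqOn (fun t => ‖g t‖) g (Set.uIcc (0:ℝ) (n:ℝ)) := by
        intro t ht
        rw [Set.uIcc_of_le hn] at ht
        exact Real.norm_of_nonneg (hgnn t ht.1)
      rw [intervalIntegral.integral_congr heq, hFTC n hn]
      linarith [(hu n hn).1]
  -- integral of g over Ioi 0 is at most 1
  have hgle : ∫ t in Set.Ioi (0:ℝ), g t ≤ 1 := by
    have htend := MeasureTheory.intervalIntegral_tendsto_integral_Ioi (l := Filter.atTop)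
      (b := fun n : ℕ => (n : ℝ)) 0 hgint tendsto_natCast_atTop_atTop
    apply le_of_tendsto htend
    filter_upwards with n
    rw [hFTC n (Nat.cast_nonneg n)]
    linarith [(hu (n:ℝ) (Nat.cast_nonneg n)).1]
  -- integrability of h on Ioi 0
  have hhmeas : AEStronglyMeasurable h (volume.restrict (Set.Ioi (0:ℝ))) :=
    (hhcont.mono Set.Ioi_subset_Ici_self).aestronglyMeasurable measurableSet_Ioi
  have hhint : IntegrableOn h (Set.Ioi 0) := by
    apply Integrable.mono (hgint.smul (1 / (2 * lam))) hhmeas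
    rw [ae_restrict_iff' measurableSet_Ioi]
    filter_upwards with t ht
    have ht' : (0:ℝ) ≤ t := le_of_lt ht
    rw [Real.norm_of_nonneg (hhnn t ht'), Pi.smul_apply, smul_eq_mul,
      Real.norm_of_nonneg (mul_nonneg (by positivity) (hgnn t ht') : (0:ℝ) ≤ 1 / (2 * lam) * g t)]
    rw [div_mul_eq_mul_div, one_mul, le_div_iff₀ (by positivity)]
    linarith [hkey t ht']
  have hIci : IntegrableOn h (Set.Ici 0) := by
    rwa [integrableOn_Ici_iff_integrableOn_Ioi]
  refine ⟨hIci, ?_, ?_⟩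
  · -- positivity
    have hIciIoi : ∫ t in Set.Ici (0:ℝ), h t = ∫ t in Set.Ioi (0:ℝ), h t :=
      MeasureTheory.integral_Ici_eq_integral_Ioi
    have h1 : (0:ℝ) < ∫ t in (0:ℝ)..1, h t := by
      apply intervalIntegral.intervalIntegral_pos_of_pos_on
      · apply ContinuousOn.intervalIntegrable
        rw [Set.uIcc_of_le zero_le_one]
        exact hhcont.mono Set.Icc_subset_Ici_self
      · exact fun x hx => hhpos x hx.1.le
      · exact zero_lt_one
    have h2 : ∫ t in (0:ℝ)..1, h t ≤ ∫ t in Set.Ioi (0:ℝ), h t := by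
      rw [intervalIntegral.integral_of_le zero_le_one]
      apply MeasureTheory.setIntegral_mono_set hhint
      · have : ∀ᵐ t ∂(volume.restrict (Set.Ioi (0:ℝ))), 0 ≤ h t := by
          rw [ae_restrict_iff' measurableSet_Ioi]
          filter_upwards with t ht using hhnn t ht.le
        exact this
      · exact Filter.Eventually.of_forall fun t ht => ht.1
    rw [hIciIoi]
    have := mul_pos hlam (lt_of_lt_of_le h1 h2)
    linarith
  · -- upper bound
    have hIciIoi : ∫ t in Set.Ici (0:ℝ), h t = ∫ t in Set.Ioi (0:ℝ), h t :=
      MeasureTheory.integral_Ici_eq_integral_Ioi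
    have hmono : ∫ t in Set.Ioi (0:ℝ), 2 * lam * h t ≤ ∫ t in Set.Ioi (0:ℝ), g t := by
      apply MeasureTheory.setIntegral_mono_on (hhint.const_mul _) hgint measurableSet_Ioi
      exact fun t ht => hkey t ht.le
    rw [MeasureTheory.integral_const_mul] at hmono
    rw [hIciIoi]
    nlinarith
end

section
/- Let μ be a solution of the sender–receiver differential system on [0,T), let D ∈ ℕ, and suppose μ_0(i) = 0 for all i > D. Assume moreover that t ↦ ∑_{i>D} μ_t(i) is differentiable on [0,T) with derivative ∑_{i>D} F_i(μ_t) (termwise differentiation of the tail sum is valid). Then μ_t(i) = 0 for every i > D and every t ∈ [0,T). -/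
/-- A solution of the sender–receiver differential system on the time domain
`D ⊆ ℝ`: a family `(μ_t)` of nonnegative functions `ℕ → ℝ` with finite moments
`S₀, S₁, S₂`, with `S₀ > 0` and `S₁ > 0`, such that each coordinate
`t ↦ μ_t(i)` is differentiable with `d/dt μ_t(i) = F_i(μ_t)` on `D`. -/
def IsSRSolution (lam : ℝ) (D : Set ℝ) (μ : ℝ → ℕ → ℝ) : Prop :=
  ∀ t ∈ D,
    (∀ i, 0 ≤ μ t i) ∧ Summable (μ t) ∧
      (Summable fun j : ℕ => (j : ℝ) * μ t j) ∧
      (Summable fun j : ℕ => (j : ℝ) ^ 2 * μ t j) ∧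
      0 < S0 (μ t) ∧ 0 < S1 (μ t) ∧
      ∀ i, HasDerivAt (fun s => μ s i) (F lam (μ t) i) t

lemma tail_F_nonpos (lam : ℝ) (hlam : 0 < lam) (μ : ℕ → ℝ) (D : ℕ)
    (hμ : ∀ i, 0 ≤ μ i) (s0 : Summable μ)
    (s1 : Summable fun j : ℕ => (j : ℝ) * μ j)
    (s2 : Summable fun j : ℕ => (j : ℝ) ^ 2 * μ j)
    (hS0 : 0 < S0 μ) (hS1 : 0 < S1 μ) :
    ∑' (i : ℕ), F lam μ (i + D + 1) ≤ 0 := by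
  set a := alphaM μ with ha_def
  set b := betaM μ with hb_def
  have ha : ∀ i, 0 ≤ a i := fun i => div_nonneg (hμ i) hS0.le
  have hb : ∀ i, 0 ≤ b i := fun i =>
    div_nonneg (mul_nonneg (Nat.cast_nonneg i) (hμ i)) hS1.le
  have sa : Summable a := s0.div_const _
  have sb : Summable b := s1.div_const _
  have sja : Summable (fun j : ℕ => (j : ℝ) * a j) := by
    have : (fun j : ℕ => (j : ℝ) * a j) = fun j : ℕ => ((j : ℝ) * μ j) / S0 μ := by
      funext j; simp [ha_def, alphaM, mul_div_assoc]
    rw [this]; exact s1.div_const _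
  have sjb : Summable (fun j : ℕ => (j : ℝ) * b j) := by
    have : (fun j : ℕ => (j : ℝ) * b j) = fun j : ℕ => ((j : ℝ) ^ 2 * μ j) / S1 μ := by
      funext j; simp only [hb_def, betaM]; ring
    rw [this]; exact s2.div_const _
  have sb1 : Summable (fun j : ℕ => ((j : ℝ) - 1) * b j) := by
    have : (fun j : ℕ => ((j : ℝ) - 1) * b j)
        = fun j : ℕ => (j : ℝ) * b j - b j := by funext j; ring
    rw [this]; exact sjb.sub sb
  have sb2 : Summable (fun j : ℕ => ((j : ℝ) - 2) * b j) := by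
    have : (fun j : ℕ => ((j : ℝ) - 2) * b j)
        = fun j : ℕ => (j : ℝ) * b j - 2 * b j := by funext j; ring
    rw [this]; exact sjb.sub (sb.mul_left 2)
  have hsum_a : ∑' j, a j = 1 := by
    simp only [ha_def, alphaM]; rw [tsum_div_const]; exact div_self hS0.ne'
  have hsum_b : ∑' j, b j = 1 := by
    simp only [hb_def, betaM]; rw [tsum_div_const]; exact div_self hS1.ne'
  have hb0 : b 0 = 0 := by simp [hb_def, betaM]
  have hB : 0 ≤ ∑' j : ℕ, ((j : ℝ) - 1) * b j := by
    apply tsum_nonneg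
    intro j
    rcases j with _ | n
    · simp [hb0]
    · apply mul_nonneg _ (hb _)
      push_cast; linarith [Nat.cast_nonneg (α := ℝ) n]
  have ha0 : a 0 ≤ 1 := by
    have := Summable.le_tsum s0 0 (fun j _ => hμ j)
    simp only [ha_def, alphaM]
    rw [div_le_one hS0]
    exact this
  have hjage : 1 - a 0 ≤ ∑' j : ℕ, (j : ℝ) * a j := by
    have se : Summable (fun j : ℕ => if j = 0 then a 0 else 0) := by
      apply summable_of_ne_finset_zero (s := {0})
      intro j hj; simp at hj; simp [hj]
    have hle : ∀ j : ℕ, a j ≤ (j : ℝ) * a j + (if j = 0 then a 0 else 0) := by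
      intro j
      rcases j with _ | n
      · simp
      · simp only [if_neg (Nat.succ_ne_zero n)]
        have h1 : (1 : ℝ) ≤ ((n + 1 : ℕ) : ℝ) := by push_cast; linarith [Nat.cast_nonneg (α := ℝ) n]
        nlinarith [ha (n + 1)]
    have := Summable.tsum_le_tsum hle sa (sja.add se)
    rw [Summable.tsum_add sja se, tsum_ite_eq 0 (fun _ => a 0), hsum_a] at this
    linarith
  have hm1 : (-1 : ℝ) ≤ ∑' j : ℕ, ((j : ℝ) - 2) * b j := by
    have hle : ∀ j : ℕ, -b j ≤ ((j : ℝ) - 2) * b j := by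
      intro j
      rcases j with _ | n
      · simp [hb0]
      · have h1 : (-1 : ℝ) ≤ ((n + 1 : ℕ) : ℝ) - 2 := by push_cast; linarith [Nat.cast_nonneg (α := ℝ) n]
        nlinarith [hb (n + 1)]
    have := Summable.tsum_le_tsum hle sb.neg sb2
    rw [tsum_neg, hsum_b] at this
    exact this
  set A := (∑' (j : ℕ), (j : ℝ) * a j) + (1 - a 0) * ∑' (j : ℕ), ((j : ℝ) - 1) * b j with hA_def
  set B := ∑' (j : ℕ), ((j : ℝ) - 1) * b j with hB_def
  set C := (∑' (j : ℕ), (j : ℝ) * a j) + (1 - a 0) * ∑' (j : ℕ), ((j : ℝ) - 2) * b j with hC_def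
  have hA : 0 ≤ A :=
    add_nonneg (tsum_nonneg fun j => mul_nonneg (Nat.cast_nonneg j) (ha j))
      (mul_nonneg (by linarith) hB)
  have hC : 0 ≤ C := by
    have h2 : (1 - a 0) * (-1) ≤ (1 - a 0) * ∑' j : ℕ, ((j : ℝ) - 2) * b j :=
      mul_le_mul_of_nonneg_left hm1 (by linarith)
    have := hjage
    rw [hC_def]; nlinarith
  -- tail summabilities
  have saT : Summable (fun i : ℕ => a (i + D + 1)) := (summable_nat_add_iff (D + 1)).2 sa
  have sbT : Summable (fun i : ℕ => b (i + D + 1)) := (summable_nat_add_iff (D + 1)).2 sb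
  have sbT2 : Summable (fun i : ℕ => b (i + D + 2)) := (summable_nat_add_iff (D + 2)).2 sb
  have htel : ∑' i : ℕ, (b (i + D + 1) - b (i + D + 2)) = b (D + 1) := by
    rw [Summable.tsum_sub sbT sbT2]
    have h1 : ∑' i : ℕ, b (i + D + 1) = b (0 + D + 1) + ∑' i : ℕ, b (i + 1 + D + 1) :=
      Summable.tsum_eq_zero_add sbT
    have h2 : ∑' i : ℕ, b (i + 1 + D + 1) = ∑' i : ℕ, b (i + D + 2) := by
      apply tsum_congr; intro i; congr 1; omega
    have h3 : (0 : ℕ) + D + 1 = D + 1 := by omega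
    rw [h2, h3] at h1
    rw [h1]; ring
  have hFeq : ∀ i : ℕ, F lam μ (i + D + 1)
      = -lam * S0 μ * (a (i + D + 1) + b (i + D + 1) * A
          + (b (i + D + 1) - b (i + D + 2)) * (B * C)) := by
    intro i
    simp only [F, ha_def, hb_def, hA_def, hB_def, hC_def]
    ring
  rw [tsum_congr hFeq, tsum_mul_left]
  have hin : ∑' i : ℕ, (a (i + D + 1) + b (i + D + 1) * A
      + (b (i + D + 1) - b (i + D + 2)) * (B * C))
      = (∑' i : ℕ, a (i + D + 1)) + (∑' i : ℕ, b (i + D + 1)) * A + b (D + 1) * (B * C) := by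
    rw [Summable.tsum_add (saT.add (sbT.mul_right A)) ((sbT.sub sbT2).mul_right (B * C)),
        Summable.tsum_add saT (sbT.mul_right A), tsum_mul_right, tsum_mul_right, htel]
  rw [hin]
  have hnn : 0 ≤ (∑' i : ℕ, a (i + D + 1)) + (∑' i : ℕ, b (i + D + 1)) * A
      + b (D + 1) * (B * C) := by
    have t1 : 0 ≤ ∑' i : ℕ, a (i + D + 1) := tsum_nonneg fun i => ha _
    have t2 : 0 ≤ ∑' i : ℕ, b (i + D + 1) := tsum_nonneg fun i => hb _
    have t3 : 0 ≤ b (D + 1) := hb _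
    have hBC : 0 ≤ B * C := mul_nonneg hB hC
    nlinarith [mul_nonneg t2 hA, mul_nonneg t3 hBC]
  nlinarith [mul_nonneg (mul_nonneg hlam.le hS0.le) hnn]

/-- If a solution of the sender–receiver differential system on `[0,T)` starts
supported in `{0,…,D}`, and the tail sum `t ↦ ∑_{i>D} μ_t(i)` can be
differentiated termwise, then the solution stays supported in `{0,…,D}`:
`μ_t(i) = 0` for every `i > D` and every `t ∈ [0,T)`. -/
theorem sr_solution_support_invariant (lam : ℝ) (hlam : 0 < lam) (T : ℝ)
    (μ : ℝ → ℕ → ℝ) (D : ℕ)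
    (hsol : IsSRSolution lam (Set.Ico 0 T) μ)
    (hinit : ∀ i, D < i → μ 0 i = 0)
    (htail : ∀ t ∈ Set.Ico (0 : ℝ) T,
      HasDerivAt (fun s => ∑' (i : ℕ), μ s (i + D + 1))
        (∑' (i : ℕ), F lam (μ t) (i + D + 1)) t) :
    ∀ t ∈ Set.Ico (0 : ℝ) T, ∀ i, D < i → μ t i = 0 := by
  intro t ht i hi
  set g : ℝ → ℝ := fun s => ∑' (i : ℕ), μ s (i + D + 1) with hg_def
  -- g is antitone on [0, T)
  have hanti : AntitoneOn g (Set.Ico 0 T) := by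
    apply antitoneOn_of_deriv_nonpos (convex_Ico 0 T)
    · intro x hx
      exact ((htail x hx).continuousAt).continuousWithinAt
    · intro x hx
      rw [interior_Ico] at hx
      exact ((htail x (Set.mem_Ico_of_Ioo hx)).differentiableAt).differentiableWithinAt
    · intro x hx
      rw [interior_Ico] at hx
      have hx' : x ∈ Set.Ico (0:ℝ) T := Set.mem_Ico_of_Ioo hx
      rw [(htail x hx').deriv]
      obtain ⟨hμn, s0, s1, s2, hS0, hS1, -⟩ := hsol x hx'
      exact tail_F_nonpos lam hlam (μ x) D hμn s0 s1 s2 hS0 hS1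
  have h0T : (0 : ℝ) ∈ Set.Ico 0 T := ⟨le_refl 0, lt_of_le_of_lt ht.1 ht.2⟩
  have hg0 : g 0 = 0 := by
    simp only [hg_def]
    have : ∀ i : ℕ, μ 0 (i + D + 1) = 0 := fun i => hinit _ (by omega)
    simp [this]
  have hgt0 : g t ≤ 0 := by
    have := hanti h0T ht ht.1
    rwa [hg0] at this
  obtain ⟨hμn, s0, -, -, -, -, -⟩ := hsol t ht
  have sT : Summable (fun k : ℕ => μ t (k + D + 1)) := (summable_nat_add_iff (D + 1)).2 s0
  have hle : μ t i ≤ g t := by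
    have : μ t i = μ t ((i - D - 1) + D + 1) := by congr 1; omega
    rw [this]
    exact Summable.le_tsum sT (i - D - 1) (fun j _ => hμn _)
  have := hμn i
  linarith
end

section
/- Let D ∈ ℕ and let μ be a solution of the sender–receiver differential system on [0,∞) supported in {0,…,D}, i.e. μ_t(i) = 0 for all i > D and all t ≥ 0. Then the total mass decays exponentially: ∑_i μ_t(i) ≤ (∑_i μ_0(i)) · e^(−λ·t) for all t ≥ 0. -/
lemma sumF_le (lam : ℝ) (hlam : 0 < lam) (D : ℕ) (ν : ℕ → ℝ)
    (hpos : ∀ i, 0 ≤ ν i) (hsum : Summable ν)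
    (hS0 : 0 < S0 ν) (hS1 : 0 < S1 ν)
    (hsupp : ∀ i, D < i → ν i = 0) :
    ∑ i ∈ Finset.range (D + 2), F lam ν i ≤ -lam * S0 ν := by
  have hS0eq : S0 ν = ∑ i ∈ Finset.range (D+2), ν i := by
    refine tsum_eq_sum ?_
    intro i hi
    exact hsupp i (by simp [Finset.mem_range] at hi; omega)
  have hS1eq : S1 ν = ∑ i ∈ Finset.range (D+2), (i:ℝ) * ν i := by
    refine tsum_eq_sum ?_
    intro i hi
    rw [hsupp i (by simp [Finset.mem_range] at hi; omega)]; ring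
  have hα : ∑ i ∈ Finset.range (D+2), alphaM ν i = 1 := by
    simp only [alphaM]
    rw [← Finset.sum_div, ← hS0eq, div_self hS0.ne']
  have hβ : ∑ i ∈ Finset.range (D+2), betaM ν i = 1 := by
    simp only [betaM]
    rw [← Finset.sum_div, ← hS1eq, div_self hS1.ne']
  have hδ : ∑ i ∈ Finset.range (D+2), (betaM ν i - betaM ν (i+1)) = 0 := by
    rw [Finset.sum_range_sub' (betaM ν)]
    simp [betaM, hsupp (D+2) (by omega)]
  have hβnn : ∀ i, 0 ≤ betaM ν i := fun i =>
    div_nonneg (mul_nonneg (Nat.cast_nonneg i) (hpos i)) hS1.le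
  have hQ : 0 ≤ ∑' j : ℕ, ((j:ℝ) - 1) * betaM ν j := by
    refine tsum_nonneg ?_
    intro j
    match j with
    | 0 => simp [betaM]
    | (n+1) =>
      refine mul_nonneg ?_ (hβnn _)
      push_cast
      linarith [(Nat.cast_nonneg n : (0:ℝ) ≤ (n:ℝ))]
  have hP : 0 ≤ ∑' j : ℕ, (j:ℝ) * alphaM ν j :=
    tsum_nonneg (fun j => mul_nonneg (Nat.cast_nonneg j)
      (div_nonneg (hpos j) hS0.le))
  have hα0 : alphaM ν 0 ≤ 1 := by
    rw [alphaM, div_le_one hS0]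
    exact Summable.le_tsum hsum 0 (fun j _ => hpos j)
  set P := ∑' j : ℕ, (j:ℝ) * alphaM ν j with hPdef
  set Q := ∑' j : ℕ, ((j:ℝ) - 1) * betaM ν j with hQdef
  set R := ∑' j : ℕ, ((j:ℝ) - 2) * betaM ν j with hRdef
  have hsumF : ∑ i ∈ Finset.range (D+2), F lam ν i
      = -lam * S0 ν * (1 + (P + (1 - alphaM ν 0) * Q)) := by
    have hFi : ∀ i, F lam ν i = -lam * S0 ν *
        (alphaM ν i + betaM ν i * (P + (1 - alphaM ν 0) * Q)
          + (betaM ν i - betaM ν (i+1)) * (Q * (P + (1 - alphaM ν 0) * R))) := by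
      intro i
      simp only [F, ← hPdef, ← hQdef, ← hRdef]
      ring
    rw [Finset.sum_congr rfl (fun i _ => hFi i), ← Finset.mul_sum]
    rw [Finset.sum_add_distrib, Finset.sum_add_distrib, ← Finset.sum_mul, ← Finset.sum_mul,
        hα, hβ, hδ]
    ring
  rw [hsumF]
  have hA : 0 ≤ P + (1 - alphaM ν 0) * Q :=
    add_nonneg hP (mul_nonneg (by linarith) hQ)
  nlinarith [mul_pos hlam hS0, mul_nonneg (mul_pos hlam hS0).le hA]

/-- For a solution of the sender–receiver differential system on `[0,∞)`
supported in `{0,…,D}`, the total mass decays exponentially: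
`∑_i μ_t(i) ≤ (∑_i μ_0(i))·e^(−λt)` for all `t ≥ 0`. -/
theorem sr_solution_mass_exp_decay (lam : ℝ) (hlam : 0 < lam) (D : ℕ)
    (μ : ℝ → ℕ → ℝ)
    (hsol : IsSRSolution lam (Set.Ici 0) μ)
    (hsupp : ∀ t, 0 ≤ t → ∀ i, D < i → μ t i = 0) :
    ∀ t, 0 ≤ t →
      ∑' (i : ℕ), μ t i ≤ (∑' (i : ℕ), μ 0 i) * Real.exp (-lam * t) := by
  have hGt : ∀ s : ℝ, 0 ≤ s → ∑' i, μ s i = ∑ i ∈ Finset.range (D+2), μ s i := by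
    intro s hs
    refine tsum_eq_sum ?_
    intro i hi
    exact hsupp s hs i (by simp [Finset.mem_range] at hi; omega)
  set h : ℝ → ℝ := fun s => (∑ i ∈ Finset.range (D+2), μ s i) * Real.exp (lam * s)
    with hh
  have hderiv : ∀ s ∈ Set.Ici (0:ℝ), HasDerivAt h
      ((∑ i ∈ Finset.range (D+2), F lam (μ s) i) * Real.exp (lam * s)
        + (∑ i ∈ Finset.range (D+2), μ s i) * (lam * Real.exp (lam * s))) s := by
    intro s hs
    obtain ⟨hpos, hsum, h1, h2, hS0, hS1, hd⟩ := hsol s hs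
    have hG : HasDerivAt (fun u => ∑ i ∈ Finset.range (D+2), μ u i)
        (∑ i ∈ Finset.range (D+2), F lam (μ s) i) s :=
      HasDerivAt.fun_sum (fun i _ => hd i)
    have hlin : HasDerivAt (fun u : ℝ => lam * u) lam s := by
      simpa using (hasDerivAt_id s).const_mul lam
    have hE : HasDerivAt (fun u : ℝ => Real.exp (lam * u)) (lam * Real.exp (lam * s)) s := by
      simpa [mul_comm] using hlin.exp
    simpa [hh] using hG.fun_mul hE
  have hanti : AntitoneOn h (Set.Ici 0) := by
    apply antitoneOn_of_deriv_nonpos (convex_Ici 0)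
    · intro s hs
      exact ((hderiv s hs).continuousAt).continuousWithinAt
    · intro s hs
      rw [interior_Ici] at hs
      exact (hderiv s (show (0:ℝ) ≤ s from le_of_lt hs)).differentiableAt.differentiableWithinAt
    · intro s hs
      rw [interior_Ici] at hs
      have hs' : (0:ℝ) ≤ s := hs.le
      rw [(hderiv s hs').deriv]
      obtain ⟨hpos, hsum, h1, h2, hS0, hS1, hd⟩ := hsol s hs'
      have hF := sumF_le lam hlam D (μ s) hpos hsum hS0 hS1 (hsupp s hs')
      have hS0G : S0 (μ s) = ∑ i ∈ Finset.range (D+2), μ s i := hGt s hs'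
      rw [hS0G] at hF
      have hexp : (0:ℝ) < Real.exp (lam * s) := Real.exp_pos _
      nlinarith [mul_le_mul_of_nonneg_right hF hexp.le]
  intro t ht
  have hmono := hanti Set.self_mem_Ici (Set.mem_Ici.mpr ht) ht
  rw [hGt t ht, hGt 0 le_rfl]
  have hexp : (0:ℝ) < Real.exp (lam * t) := Real.exp_pos _
  rw [neg_mul, Real.exp_neg, ← div_eq_mul_inv, le_div_iff₀ hexp]
  simpa [hh] using hmono
end

section
/- Let D ∈ ℕ, λ > 0 and T ∈ (0,∞]. If μ and η are two solutions of the sender–receiver differential system on [0,T), both supported in {0,…,D} (i.e. μ_t(i) = η_t(i) = 0 for all i > D and t ∈ [0,T)), and μ_0 = η_0, then μ_t = η_t for all t ∈ [0,T). -/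
section SRAux

open Finset

/-- Extend a finite vector to a function on `ℕ` by zero. -/
noncomputable def extD (D : ℕ) (x : Fin (D+1) → ℝ) : ℕ → ℝ :=
  fun j => if h : j < D + 1 then x ⟨j, h⟩ else 0

lemma extD_zero_of_ge (D : ℕ) (x : Fin (D+1) → ℝ) {j : ℕ} (hj : ¬ j < D + 1) :
    extD D x j = 0 := dif_neg hj

noncomputable def s0' (D : ℕ) (x : Fin (D+1) → ℝ) : ℝ :=
  ∑ j ∈ Finset.range (D+1), extD D x j

noncomputable def s1' (D : ℕ) (x : Fin (D+1) → ℝ) : ℝ :=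
  ∑ j ∈ Finset.range (D+1), (j : ℝ) * extD D x j

noncomputable def SA (D : ℕ) (x : Fin (D+1) → ℝ) : ℝ :=
  ∑ j ∈ Finset.range (D+1), (j : ℝ) * (extD D x j / s0' D x)

noncomputable def SB (D : ℕ) (c : ℝ) (x : Fin (D+1) → ℝ) : ℝ :=
  ∑ j ∈ Finset.range (D+1), ((j : ℝ) - c) * ((j : ℝ) * extD D x j / s1' D x)

noncomputable def G (lam : ℝ) (D : ℕ) (x : Fin (D+1) → ℝ) (i : ℕ) : ℝ :=
  -lam * s0' D x *
    (extD D x i / s0' D x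
      + ((i : ℝ) * extD D x i / s1' D x) *
          (SA D x + (1 - extD D x 0 / s0' D x) * SB D 1 x)
      + ((i : ℝ) * extD D x i / s1' D x
            - ((i + 1 : ℕ) : ℝ) * extD D x (i + 1) / s1' D x) * SB D 1 x *
          (SA D x + (1 - extD D x 0 / s0' D x) * SB D 2 x))

lemma S0_extD (D : ℕ) (x : Fin (D+1) → ℝ) : S0 (extD D x) = s0' D x :=
  tsum_eq_sum fun _ hj => extD_zero_of_ge D x (by simpa using hj)

lemma S1_extD (D : ℕ) (x : Fin (D+1) → ℝ) : S1 (extD D x) = s1' D x :=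
  tsum_eq_sum fun _ hj => by
    rw [extD_zero_of_ge D x (by simpa using hj), mul_zero]

lemma alphaM_extD (D : ℕ) (x : Fin (D+1) → ℝ) (i : ℕ) :
    alphaM (extD D x) i = extD D x i / s0' D x := by
  rw [alphaM, S0_extD]

lemma betaM_extD (D : ℕ) (x : Fin (D+1) → ℝ) (i : ℕ) :
    betaM (extD D x) i = (i : ℝ) * extD D x i / s1' D x := by
  rw [betaM, S1_extD]

lemma tsumA_extD (D : ℕ) (x : Fin (D+1) → ℝ) :
    (∑' j : ℕ, (j : ℝ) * alphaM (extD D x) j) = SA D x := by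
  rw [SA]
  refine (tsum_eq_sum fun j hj => ?_).trans
    (Finset.sum_congr rfl fun j _ => by rw [alphaM_extD])
  rw [alphaM, extD_zero_of_ge D x (by simpa using hj), zero_div, mul_zero]

lemma tsumB_extD (D : ℕ) (x : Fin (D+1) → ℝ) (c : ℝ) :
    (∑' j : ℕ, ((j : ℝ) - c) * betaM (extD D x) j) = SB D c x := by
  rw [SB]
  refine (tsum_eq_sum fun j hj => ?_).trans
    (Finset.sum_congr rfl fun j _ => by rw [betaM_extD])
  rw [betaM, extD_zero_of_ge D x (by simpa using hj), mul_zero, zero_div, mul_zero]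

lemma F_extD (lam : ℝ) (D : ℕ) (x : Fin (D+1) → ℝ) (i : ℕ) :
    F lam (extD D x) i = G lam D x i := by
  rw [F, G, S0_extD, alphaM_extD, alphaM_extD, betaM_extD, betaM_extD,
    tsumA_extD, tsumB_extD, tsumB_extD]

end SRAux
section SRAux2

open Finset Set

lemma contDiff_extD (D : ℕ) (j : ℕ) : ContDiff ℝ 1 fun x : Fin (D+1) → ℝ => extD D x j := by
  unfold extD
  by_cases h : j < D + 1
  · simp only [dif_pos h]
    exact (ContinuousLinearMap.proj (⟨j, h⟩ : Fin (D+1)) :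
      (Fin (D+1) → ℝ) →L[ℝ] ℝ).contDiff
  · simp only [dif_neg h]
    exact contDiff_const

lemma contDiff_s0' (D : ℕ) : ContDiff ℝ 1 (s0' D) := by
  unfold s0'
  exact ContDiff.sum fun j _ => contDiff_extD D j

lemma contDiff_s1' (D : ℕ) : ContDiff ℝ 1 (s1' D) := by
  unfold s1'
  exact ContDiff.sum fun j _ => contDiff_const.mul (contDiff_extD D j)

/-- The open region where the vector field is smooth. -/
def Ureg (D : ℕ) : Set (Fin (D+1) → ℝ) := {x | 0 < s0' D x ∧ 0 < s1' D x}

lemma isOpen_Ureg (D : ℕ) : IsOpen (Ureg D) :=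
  IsOpen.and (isOpen_lt continuous_const (contDiff_s0' D).continuous)
    (isOpen_lt continuous_const (contDiff_s1' D).continuous)

lemma s0'_ne (D : ℕ) : ∀ x ∈ Ureg D, s0' D x ≠ 0 := fun _ hx => ne_of_gt hx.1
lemma s1'_ne (D : ℕ) : ∀ x ∈ Ureg D, s1' D x ≠ 0 := fun _ hx => ne_of_gt hx.2

lemma contDiffOn_a (D : ℕ) (j : ℕ) :
    ContDiffOn ℝ 1 (fun x => extD D x j / s0' D x) (Ureg D) :=
  (contDiff_extD D j).contDiffOn.div (contDiff_s0' D).contDiffOn (s0'_ne D)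

lemma contDiffOn_b (D : ℕ) (c : ℝ) (j : ℕ) :
    ContDiffOn ℝ 1 (fun x => c * extD D x j / s1' D x) (Ureg D) :=
  (contDiffOn_const.mul (contDiff_extD D j).contDiffOn).div
    (contDiff_s1' D).contDiffOn (s1'_ne D)

lemma contDiffOn_SA (D : ℕ) : ContDiffOn ℝ 1 (SA D) (Ureg D) := by
  unfold SA
  exact ContDiffOn.sum fun j _ => contDiffOn_const.mul (contDiffOn_a D j)

lemma contDiffOn_SB (D : ℕ) (c : ℝ) : ContDiffOn ℝ 1 (SB D c) (Ureg D) := by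
  unfold SB
  exact ContDiffOn.sum fun j _ => contDiffOn_const.mul (contDiffOn_b D (j : ℝ) j)

lemma contDiffOn_G (lam : ℝ) (D : ℕ) (i : ℕ) :
    ContDiffOn ℝ 1 (fun x => G lam D x i) (Ureg D) := by
  unfold G
  have hfac : ContDiffOn ℝ 1 (fun x => (1 : ℝ) - extD D x 0 / s0' D x) (Ureg D) :=
    contDiffOn_const.sub (contDiffOn_a D 0)
  exact (contDiffOn_const.mul (contDiff_s0' D).contDiffOn).mul
    (((contDiffOn_a D i).add
        ((contDiffOn_b D (i : ℝ) i).mul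
          ((contDiffOn_SA D).add (hfac.mul (contDiffOn_SB D 1))))).add
      ((((contDiffOn_b D (i : ℝ) i).sub (contDiffOn_b D ((i + 1 : ℕ) : ℝ) (i + 1))).mul
          (contDiffOn_SB D 1)).mul
        ((contDiffOn_SA D).add (hfac.mul (contDiffOn_SB D 2)))))

/-- The finite-dimensional vector field. -/
noncomputable def vfD (lam : ℝ) (D : ℕ) (x : Fin (D+1) → ℝ) : Fin (D+1) → ℝ :=
  fun i => G lam D x (i : ℕ)

lemma contDiffOn_vfD (lam : ℝ) (D : ℕ) : ContDiffOn ℝ 1 (vfD lam D) (Ureg D) :=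
  contDiffOn_pi.2 fun i => contDiffOn_G lam D i

lemma exists_lipschitzOnWith_vfD (lam : ℝ) (D : ℕ) {A : Set (Fin (D+1) → ℝ)}
    (hA : A ⊆ Ureg D) (hconv : Convex ℝ A) (hcomp : IsCompact A) :
    ∃ K : NNReal, LipschitzOnWith K (vfD lam D) A := by
  have hcontf : ContinuousOn (fun x => fderiv ℝ (vfD lam D) x) (Ureg D) :=
    (contDiffOn_vfD lam D).continuousOn_fderiv_of_isOpen (isOpen_Ureg D) le_rfl
  obtain ⟨C, hC⟩ := hcomp.exists_bound_of_continuousOn (hcontf.mono hA)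
  refine ⟨⟨max C 0, le_max_right _ _⟩, ?_⟩
  apply hconv.lipschitzOnWith_of_nnnorm_hasFDerivWithin_le
    (f' := fun x => fderiv ℝ (vfD lam D) x)
  · intro x hx
    exact (((contDiffOn_vfD lam D).differentiableOn one_ne_zero).differentiableAt
      ((isOpen_Ureg D).mem_nhds (hA hx))).hasFDerivAt.hasFDerivWithinAt
  · intro x hx
    exact Subtype.coe_le_coe.mp (le_trans (hC x hx) (le_max_left _ _))

end SRAux2
section SRAux3

open Finset

lemma s0'_eq (D : ℕ) (x : Fin (D+1) → ℝ) : s0' D x = ∑ i : Fin (D+1), x i := by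
  rw [s0', Finset.sum_range]
  exact Finset.sum_congr rfl fun i _ => by
    simp [extD]; intro h; exact absurd h (by have := i.isLt; omega)

lemma s1'_eq (D : ℕ) (x : Fin (D+1) → ℝ) :
    s1' D x = ∑ i : Fin (D+1), ((i : ℕ) : ℝ) * x i := by
  rw [s1', Finset.sum_range]
  exact Finset.sum_congr rfl fun i _ => by
    simp [extD]; intro h; exact absurd h (by have := i.isLt; omega)

lemma isLinearMap_s0' (D : ℕ) : IsLinearMap ℝ (s0' D) := by
  constructor
  · intro x y; simp [s0'_eq, Finset.sum_add_distrib]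
  · intro c x; simp [s0'_eq, Finset.mul_sum, smul_eq_mul]

lemma isLinearMap_s1' (D : ℕ) : IsLinearMap ℝ (s1' D) := by
  constructor
  · intro x y; simp [s1'_eq, mul_add, Finset.sum_add_distrib]
  · intro c x
    simp only [s1'_eq, Pi.smul_apply, smul_eq_mul, Finset.mul_sum]
    exact Finset.sum_congr rfl fun i _ => by ring

end SRAux3
/-- Uniqueness for the sender–receiver differential system: if `T ∈ (0,∞]`
and `μ`, `η` are two solutions on `[0,T)`, both supported in `{0,…,D}`, with
the same initial condition `μ_0 = η_0`, then `μ_t = η_t` for all `t ∈ [0,T)`. -/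
theorem sr_solution_unique (lam : ℝ) (hlam : 0 < lam) (D : ℕ)
    (T : EReal) (hT : 0 < T) (μ η : ℝ → ℕ → ℝ)
    (hμ : IsSRSolution lam {t : ℝ | 0 ≤ t ∧ (t : EReal) < T} μ)
    (hη : IsSRSolution lam {t : ℝ | 0 ≤ t ∧ (t : EReal) < T} η)
    (hμsupp : ∀ t : ℝ, 0 ≤ t → (t : EReal) < T → ∀ i, D < i → μ t i = 0)
    (hηsupp : ∀ t : ℝ, 0 ≤ t → (t : EReal) < T → ∀ i, D < i → η t i = 0)
    (hinit : μ 0 = η 0) :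
    ∀ t : ℝ, 0 ≤ t → (t : EReal) < T → μ t = η t := by
  intro t ht0 htT
  have hdom : ∀ s : ℝ, s ∈ Set.Icc (0:ℝ) t →
      s ∈ {t : ℝ | 0 ≤ t ∧ (t : EReal) < T} := fun s hs =>
    ⟨hs.1, lt_of_le_of_lt (EReal.coe_le_coe_iff.2 hs.2) htT⟩
  set f : ℝ → (Fin (D+1) → ℝ) := fun s i => μ s (i : ℕ) with hfdef
  set g : ℝ → (Fin (D+1) → ℝ) := fun s i => η s (i : ℕ) with hgdef
  have hextf : ∀ s ∈ Set.Icc (0:ℝ) t, extD D (f s) = μ s := by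
    intro s hs; funext j
    by_cases h : j < D + 1
    · simp [extD, h, hfdef]
    · rw [extD_zero_of_ge D _ h,
        hμsupp s (hdom s hs).1 (hdom s hs).2 j (by omega)]
  have hextg : ∀ s ∈ Set.Icc (0:ℝ) t, extD D (g s) = η s := by
    intro s hs; funext j
    by_cases h : j < D + 1
    · simp [extD, h, hgdef]
    · rw [extD_zero_of_ge D _ h,
        hηsupp s (hdom s hs).1 (hdom s hs).2 j (by omega)]
  have hfD : ∀ s ∈ Set.Icc (0:ℝ) t, HasDerivAt f (vfD lam D (f s)) s := by
    intro s hs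
    have h := (hμ s (hdom s hs)).2.2.2.2.2.2
    have h2 : HasDerivAt f (fun i : Fin (D+1) => F lam (μ s) (i : ℕ)) s :=
      hasDerivAt_pi.2 fun i => h (i : ℕ)
    convert h2 using 1
    funext i
    rw [vfD, ← F_extD, hextf s hs]
  have hgD : ∀ s ∈ Set.Icc (0:ℝ) t, HasDerivAt g (vfD lam D (g s)) s := by
    intro s hs
    have h := (hη s (hdom s hs)).2.2.2.2.2.2
    have h2 : HasDerivAt g (fun i : Fin (D+1) => F lam (η s) (i : ℕ)) s :=
      hasDerivAt_pi.2 fun i => h (i : ℕ)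
    convert h2 using 1
    funext i
    rw [vfD, ← F_extD, hextg s hs]
  have hfc : ContinuousOn f (Set.Icc 0 t) :=
    continuousOn_of_forall_continuousAt fun s hs => (hfD s hs).continuousAt
  have hgc : ContinuousOn g (Set.Icc 0 t) :=
    continuousOn_of_forall_continuousAt fun s hs => (hgD s hs).continuousAt
  have hs0f : ∀ s ∈ Set.Icc (0:ℝ) t, 0 < s0' D (f s) := fun s hs => by
    rw [← S0_extD, hextf s hs]; exact (hμ s (hdom s hs)).2.2.2.2.1
  have hs1f : ∀ s ∈ Set.Icc (0:ℝ) t, 0 < s1' D (f s) := fun s hs => by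
    rw [← S1_extD, hextf s hs]; exact (hμ s (hdom s hs)).2.2.2.2.2.1
  have hs0g : ∀ s ∈ Set.Icc (0:ℝ) t, 0 < s0' D (g s) := fun s hs => by
    rw [← S0_extD, hextg s hs]; exact (hη s (hdom s hs)).2.2.2.2.1
  have hs1g : ∀ s ∈ Set.Icc (0:ℝ) t, 0 < s1' D (g s) := fun s hs => by
    rw [← S1_extD, hextg s hs]; exact (hη s (hdom s hs)).2.2.2.2.2.1
  have hne : (Set.Icc (0:ℝ) t).Nonempty := Set.nonempty_Icc.2 ht0
  have hcomp : IsCompact (Set.Icc (0:ℝ) t) := isCompact_Icc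
  have hc0f : ContinuousOn (fun s => s0' D (f s)) (Set.Icc 0 t) :=
    (contDiff_s0' D).continuous.comp_continuousOn hfc
  have hc1f : ContinuousOn (fun s => s1' D (f s)) (Set.Icc 0 t) :=
    (contDiff_s1' D).continuous.comp_continuousOn hfc
  have hc0g : ContinuousOn (fun s => s0' D (g s)) (Set.Icc 0 t) :=
    (contDiff_s0' D).continuous.comp_continuousOn hgc
  have hc1g : ContinuousOn (fun s => s1' D (g s)) (Set.Icc 0 t) :=
    (contDiff_s1' D).continuous.comp_continuousOn hgc
  obtain ⟨a1, ha1, hm1⟩ := hcomp.exists_isMinOn hne hc0f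
  obtain ⟨a2, ha2, hm2⟩ := hcomp.exists_isMinOn hne hc1f
  obtain ⟨a3, ha3, hm3⟩ := hcomp.exists_isMinOn hne hc0g
  obtain ⟨a4, ha4, hm4⟩ := hcomp.exists_isMinOn hne hc1g
  set ε : ℝ := min (min (s0' D (f a1)) (s1' D (f a2)))
      (min (s0' D (g a3)) (s1' D (g a4))) with hεdef
  have hε : 0 < ε :=
    lt_min (lt_min (hs0f a1 ha1) (hs1f a2 ha2)) (lt_min (hs0g a3 ha3) (hs1g a4 ha4))
  obtain ⟨Cf, hCf⟩ := hcomp.exists_bound_of_continuousOn hfc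
  obtain ⟨Cg, hCg⟩ := hcomp.exists_bound_of_continuousOn hgc
  set R : ℝ := max Cf Cg with hRdef
  set A : Set (Fin (D+1) → ℝ) := Metric.closedBall 0 R ∩
      ({x | ε ≤ s0' D x} ∩ {x | ε ≤ s1' D x}) with hAdef
  have hAU : A ⊆ Ureg D := fun x hx =>
    ⟨lt_of_lt_of_le hε hx.2.1, lt_of_lt_of_le hε hx.2.2⟩
  have hconv : Convex ℝ A :=
    (convex_closedBall _ _).inter ((convex_halfSpace_ge (isLinearMap_s0' D) ε).inter
      (convex_halfSpace_ge (isLinearMap_s1' D) ε))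
  have hAcomp : IsCompact A :=
    (isCompact_closedBall _ _).inter_right
      ((isClosed_le continuous_const (contDiff_s0' D).continuous).inter
        (isClosed_le continuous_const (contDiff_s1' D).continuous))
  obtain ⟨K, hK⟩ := exists_lipschitzOnWith_vfD lam D hAU hconv hAcomp
  have hfmem : ∀ s ∈ Set.Icc (0:ℝ) t, f s ∈ A := by
    intro s hs
    refine ⟨mem_closedBall_zero_iff.2 ((hCf s hs).trans (le_max_left _ _)), ?_, ?_⟩
    · exact le_trans (min_le_left _ _ |>.trans (min_le_left _ _))
        (isMinOn_iff.mp hm1 s hs)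
    · exact le_trans (min_le_left _ _ |>.trans (min_le_right _ _))
        (isMinOn_iff.mp hm2 s hs)
  have hgmem : ∀ s ∈ Set.Icc (0:ℝ) t, g s ∈ A := by
    intro s hs
    refine ⟨mem_closedBall_zero_iff.2 ((hCg s hs).trans (le_max_right _ _)), ?_, ?_⟩
    · exact le_trans (min_le_right _ _ |>.trans (min_le_left _ _))
        (isMinOn_iff.mp hm3 s hs)
    · exact le_trans (min_le_right _ _ |>.trans (min_le_right _ _))
        (isMinOn_iff.mp hm4 s hs)
  have hvlip : ∀ s : ℝ, LipschitzOnWith K (vfD lam D) A := fun _ => hK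
  have heq : Set.EqOn f g (Set.Icc 0 t) := by
    refine ODE_solution_unique_of_mem_Icc_right
      (v := fun _ => vfD lam D) (s := fun _ => A) (K := K)
      (fun s _ => hvlip s) hfc
      (fun s hs => (hfD s (Set.Ico_subset_Icc_self hs)).hasDerivWithinAt)
      (fun s hs => hfmem s (Set.Ico_subset_Icc_self hs)) hgc
      (fun s hs => (hgD s (Set.Ico_subset_Icc_self hs)).hasDerivWithinAt)
      (fun s hs => hgmem s (Set.Ico_subset_Icc_self hs)) ?_
    funext i
    simp [hfdef, hgdef, hinit]
  have hfg : f t = g t := heq (Set.right_mem_Icc.2 ht0)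
  funext i
  by_cases hi : i < D + 1
  · have := congrFun hfg ⟨i, hi⟩
    simpa [hfdef, hgdef] using this
  · rw [hμsupp t ht0 htT i (by omega), hηsupp t ht0 htT i (by omega)]
end
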